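/- Under the assumptions E[φ(X)² exp(-θ·X)] < ∞ for all θ and P(φ(X) ≠ 0) > 0, there exists a unique θ* ∈ R^d minimizing v(θ) = E[φ(X)² exp(-X·θ + ‖θ‖²/2)], and θ* is characterized by ∇v(θ*) = 0. -/

import Mathlib

/-!
Completing the square, `exp (-⟪x, θ⟫ + ‖θ‖² / 2) = exp (‖θ - x‖² / 2 - ‖x‖² / 2)`, so
`v θ = ∫ exp (‖θ - x‖² / 2) dμ` for the measure `μ = φ² exp (-‖x‖² / 2) · N(0, I)`, which is
finite, and nonzero because `φ` is not a.e. zero. Every `θ ↦ exp (‖θ - x‖² / 2)` is strictly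
convex, hence so is `v`; the bound `exp t ≥ t` gives `v θ ≥ μ(ℝᵈ) ‖θ‖² / 4 - C`, so `v` is
coercive and has a unique minimizer. Minimizers of a differentiable convex function are exactly
its critical points, and `v` is differentiable under the integral sign: in finite dimension
`exp (K ‖y‖)` is dominated by finitely many `exp ⟪s, y⟫`, and these only shift the centre of
the integrand.
-/

open MeasureTheory Real RealInnerProductSpace

noncomputable def stdGaussDensity (d : ℕ) (x : EuclideanSpace ℝ (Fin d)) : ℝ :=
  (2 * Real.pi) ^ (-(d : ℝ) / 2) * Real.exp (-‖x‖ ^ 2 / 2)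

noncomputable def secondMoment (d : ℕ) (φ : EuclideanSpace ℝ (Fin d) → ℝ)
    (θ : EuclideanSpace ℝ (Fin d)) : ℝ :=
  ∫ x, (φ x) ^ 2 * Real.exp (-⟪x, θ⟫ + ‖θ‖ ^ 2 / 2) * stdGaussDensity d x

open Set Filter Topology

section ConvexMinimization

variable {E : Type*} [NormedAddCommGroup E] {f : E → ℝ} {x : E}

theorem ConvexOn.isMinOn_of_hasFDerivAt_zero [NormedSpace ℝ E] (hf : ConvexOn ℝ univ f)
    (hx : HasFDerivAt f (0 : E →L[ℝ] ℝ) x) : IsMinOn f univ x := by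
  intro y _
  have hline : ConvexOn ℝ univ (f ∘ AffineMap.lineMap x y) := hf.comp_affineMap _
  have hx' : HasFDerivAt f (0 : E →L[ℝ] ℝ) (AffineMap.lineMap x y (0 : ℝ)) := by
    simpa using hx
  have hderiv : HasDerivAt (f ∘ AffineMap.lineMap (k := ℝ) x y) 0 0 := by
    simpa using hx'.comp_hasDerivAt (0 : ℝ) AffineMap.hasDerivAt_lineMap
  simpa [slope_def_field] using
    hline.le_slope_of_hasDerivAt (mem_univ 0) (mem_univ 1) one_pos hderiv

theorem ConvexOn.forall_le_iff_gradient_eq_zero [InnerProductSpace ℝ E] [CompleteSpace E]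
    (hf : ConvexOn ℝ univ f) (hx : DifferentiableAt ℝ f x) :
    (∀ y, f x ≤ f y) ↔ gradient f x = 0 := by
  rw [gradient, LinearIsometryEquiv.map_eq_zero_iff]
  refine ⟨fun hmin => IsLocalMin.fderiv_eq_zero (Eventually.of_forall hmin), fun h0 y => ?_⟩
  exact ConvexOn.isMinOn_of_hasFDerivAt_zero hf (h0 ▸ hx.hasFDerivAt) (mem_univ y)

theorem StrictConvexOn.existsUnique_forall_le [NormedSpace ℝ E] [ProperSpace E]
    (hf : StrictConvexOn ℝ univ f) (hcont : Continuous f) (htend : Tendsto f (cocompact E) atTop) :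
    ∃! x, ∀ y, f x ≤ f y := by
  obtain ⟨x, hx⟩ := hcont.exists_forall_le htend
  exact ⟨x, hx, fun y hy =>
    hf.eq_of_isMinOn (fun z _ => hy z) (fun z _ => hx z) (mem_univ y) (mem_univ x)⟩

end ConvexMinimization

theorem strictConvexOn_integral {E α : Type*} [AddCommGroup E] [Module ℝ E] [MeasurableSpace α]
    {μ : Measure α} {s : Set E} {F : E → α → ℝ} (hs : Convex ℝ s)
    (hF : ∀ x, StrictConvexOn ℝ s (F · x)) (hint : ∀ θ ∈ s, Integrable (F θ) μ) (hμ : μ ≠ 0) :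
    StrictConvexOn ℝ s fun θ => ∫ x, F θ x ∂μ := by
  refine ⟨hs, fun a ha b hb hab t u ht hu htu => ?_⟩
  have hlt (x : α) : F (t • a + u • b) x < t * F a x + u * F b x := (hF x).2 ha hb hab ht hu htu
  have hint_comb : Integrable (fun x => t * F a x + u * F b x) μ :=
    ((hint a ha).const_mul t).add ((hint b hb).const_mul u)
  have hint_mid := hint _ (hs ha hb ht.le hu.le htu)
  have hpos : 0 < ∫ x, (t * F a x + u * F b x) - F (t • a + u • b) x ∂μ := by
    rw [integral_pos_iff_support_of_nonneg (fun x => (sub_pos.2 (hlt x)).le)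
      (hint_comb.sub hint_mid)]
    simpa [Function.support, (sub_pos.2 (hlt _)).ne', Measure.measure_univ_pos] using hμ
  rw [integral_sub hint_comb hint_mid, integral_add
    ((hint a ha).const_mul t) ((hint b hb).const_mul u), integral_const_mul,
    integral_const_mul] at hpos
  simpa [smul_eq_mul] using sub_pos.1 hpos

section InnerProductSpace

variable {E : Type*} [NormedAddCommGroup E] [InnerProductSpace ℝ E]

theorem norm_smul_add_smul_sub_sq (u v x : E) {a b : ℝ} (hab : a + b = 1) :
    ‖(a • u + b • v) - x‖ ^ 2 = a * ‖u - x‖ ^ 2 + b * ‖v - x‖ ^ 2 - a * b * ‖u - v‖ ^ 2 := by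
  obtain rfl : b = 1 - a := by linarith
  have hcomb : (a • u + (1 - a) • v) - x = a • (u - x) + (1 - a) • (v - x) := by module
  have hdiff : u - v = (u - x) - (v - x) := by abel
  generalize u - x = p, v - x = q at hcomb hdiff
  rw [hcomb, hdiff, norm_add_sq_real, norm_sub_sq_real, real_inner_smul_left,
    real_inner_smul_right, norm_smul, norm_smul, Real.norm_eq_abs, Real.norm_eq_abs, mul_pow,
    mul_pow, sq_abs, sq_abs]
  ring

theorem strictConvexOn_exp_half_sq_dist (x : E) :
    StrictConvexOn ℝ univ fun θ : E => exp (‖θ - x‖ ^ 2 / 2) := by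
  refine ⟨convex_univ, fun u _ v _ huv a b ha hb hab => ?_⟩
  have hgap : 0 < a * b * ‖u - v‖ ^ 2 := by
    have := norm_pos_iff.2 (sub_ne_zero.2 huv)
    positivity
  calc exp (‖(a • u + b • v) - x‖ ^ 2 / 2)
      < exp (a * (‖u - x‖ ^ 2 / 2) + b * (‖v - x‖ ^ 2 / 2)) := by
        rw [exp_lt_exp, norm_smul_add_smul_sub_sq u v x hab]
        linarith
    _ ≤ a • exp (‖u - x‖ ^ 2 / 2) + b • exp (‖v - x‖ ^ 2 / 2) :=
        convexOn_exp.2 (mem_univ _) (mem_univ _) ha.le hb.le hab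

theorem hasFDerivAt_exp_half_sq_dist (x θ : E) :
    HasFDerivAt (fun θ : E => exp (‖θ - x‖ ^ 2 / 2))
      (exp (‖θ - x‖ ^ 2 / 2) • innerSL ℝ (θ - x)) θ := by
  have hsq : HasFDerivAt (fun θ : E => ‖θ - x‖ ^ 2 / 2) (innerSL ℝ (θ - x)) θ := by
    have h := ((hasFDerivAt_id θ).sub_const x).norm_sq.mul_const (1 / 2 : ℝ)
    simp only [id, ← div_eq_mul_one_div] at h
    refine h.congr_fderiv ?_
    ext v
    simp
  exact hsq.exp

theorem exists_finset_forall_exists_norm_le_inner [FiniteDimensional ℝ E] :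
    ∃ S : Finset E, ∀ y : E, ∃ s ∈ S, ‖y‖ ≤ ⟪s, y⟫ := by
  classical
  -- the centre `c` of a ball of radius `1 / 2` containing `y / ‖y‖` has `⟪c, y⟫ ≥ ‖y‖ / 2`
  obtain ⟨t, -, ht_fin, ht_cover⟩ :=
    finite_cover_balls_of_compact (isCompact_sphere (0 : E) 1) (by norm_num : (0 : ℝ) < 1 / 2)
  refine ⟨insert 0 (ht_fin.toFinset.image ((2 : ℝ) • ·)), fun y => ?_⟩
  rcases eq_or_ne y 0 with rfl | hy
  · exact ⟨0, Finset.mem_insert_self _ _, by simp⟩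
  have hy' : 0 < ‖y‖ := norm_pos_iff.2 hy
  have hunit : ‖y‖⁻¹ • y ∈ Metric.sphere (0 : E) 1 := by simp [norm_smul, hy'.ne']
  obtain ⟨c, hc, hdist⟩ := mem_iUnion₂.1 (ht_cover hunit)
  refine ⟨(2 : ℝ) • c,
    Finset.mem_insert_of_mem (Finset.mem_image_of_mem _ (by simpa using hc)), ?_⟩
  have hu : ⟪‖y‖⁻¹ • y, y⟫ = ‖y‖ := by
    rw [real_inner_smul_left, real_inner_self_eq_norm_sq]
    field_simp
  have hcs : |⟪‖y‖⁻¹ • y - c, y⟫| ≤ ‖y‖ / 2 := by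
    refine (abs_real_inner_le_norm _ _).trans ?_
    rw [← dist_eq_norm]
    nlinarith [(Metric.mem_ball.1 hdist).le]
  have hsplit : ⟪c, y⟫ = ⟪‖y‖⁻¹ • y, y⟫ - ⟪‖y‖⁻¹ • y - c, y⟫ := by
    rw [inner_sub_left]; ring
  rw [real_inner_smul_left, hsplit, hu]
  linarith [le_abs_self ⟪‖y‖⁻¹ • y - c, y⟫]

end InnerProductSpace

section ExpHalfSqDistIntegral

variable {E : Type*} [NormedAddCommGroup E] [InnerProductSpace ℝ E] [MeasurableSpace E]
  {μ : Measure E}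

noncomputable def expHalfSqDistIntegral (μ : Measure E) (θ : E) : ℝ :=
  ∫ x, exp (‖θ - x‖ ^ 2 / 2) ∂μ

theorem strictConvexOn_expHalfSqDistIntegral
    (hμ : ∀ θ, Integrable (fun x => exp (‖θ - x‖ ^ 2 / 2)) μ) (hμ0 : μ ≠ 0) :
    StrictConvexOn ℝ univ (expHalfSqDistIntegral μ) :=
  strictConvexOn_integral convex_univ strictConvexOn_exp_half_sq_dist (fun θ _ => hμ θ) hμ0

variable [FiniteDimensional ℝ E] [BorelSpace E]

theorem integrable_exp_half_sq_dist_add_mul_norm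
    (hμ : ∀ θ, Integrable (fun x => exp (‖θ - x‖ ^ 2 / 2)) μ) (θ : E) {K : ℝ} (hK : 0 ≤ K) :
    Integrable (fun x => exp (‖θ - x‖ ^ 2 / 2 + K * ‖θ - x‖)) μ := by
  obtain ⟨S, hS⟩ := exists_finset_forall_exists_norm_le_inner (E := E)
  have hshift (s y : E) : exp (‖y‖ ^ 2 / 2 + ⟪K • s, y⟫)
      = exp (-‖K • s‖ ^ 2 / 2) * exp (‖(θ + K • s) - (θ - y)‖ ^ 2 / 2) := by
    rw [← exp_add, add_sub_sub_cancel, norm_add_sq_real]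
    ring_nf
  refine (integrable_finsetSum S fun s _ => (hμ (θ + K • s)).const_mul
    (exp (-‖K • s‖ ^ 2 / 2))).mono' (by fun_prop) (Eventually.of_forall fun x => ?_)
  obtain ⟨s, hs, hle⟩ := hS (θ - x)
  rw [norm_of_nonneg (exp_pos _).le]
  calc exp (‖θ - x‖ ^ 2 / 2 + K * ‖θ - x‖)
      ≤ exp (‖θ - x‖ ^ 2 / 2 + ⟪K • s, θ - x⟫) := by
        rw [exp_le_exp, real_inner_smul_left]
        nlinarith
    _ = exp (-‖K • s‖ ^ 2 / 2) * exp (‖(θ + K • s) - x‖ ^ 2 / 2) := by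
        rw [hshift, sub_sub_cancel]
    _ ≤ _ := Finset.single_le_sum
          (f := fun s => exp (-‖K • s‖ ^ 2 / 2) * exp (‖(θ + K • s) - x‖ ^ 2 / 2))
          (fun _ _ => by positivity) hs

theorem hasFDerivAt_expHalfSqDistIntegral
    (hμ : ∀ θ, Integrable (fun x => exp (‖θ - x‖ ^ 2 / 2)) μ) (θ₀ : E) :
    HasFDerivAt (expHalfSqDistIntegral μ)
      (∫ x, exp (‖θ₀ - x‖ ^ 2 / 2) • innerSL ℝ (θ₀ - x) ∂μ) θ₀ := by
  have hbound : ∀ x, ∀ θ ∈ Metric.ball θ₀ 1,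
      ‖exp (‖θ - x‖ ^ 2 / 2) • innerSL ℝ (θ - x)‖
        ≤ exp (3 / 2) * exp (‖θ₀ - x‖ ^ 2 / 2 + 2 * ‖θ₀ - x‖) := by
    intro x θ hθ
    -- with `r = ‖θ₀ - x‖`: `‖θ - x‖ ≤ r + 1` and `(r + 1)² / 2 + (r + 1) = r² / 2 + 2 r + 3 / 2`
    have hdist : ‖θ - x‖ ≤ ‖θ₀ - x‖ + 1 := by
      have := norm_sub_le_norm_sub_add_norm_sub θ θ₀ x
      rw [← dist_eq_norm θ θ₀] at this
      linarith [(Metric.mem_ball.1 hθ).le]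
    rw [norm_smul, innerSL_apply_norm, norm_of_nonneg (exp_pos _).le, ← exp_add]
    calc exp (‖θ - x‖ ^ 2 / 2) * ‖θ - x‖ ≤ exp (‖θ - x‖ ^ 2 / 2) * exp ‖θ - x‖ := by
          gcongr
          linarith [add_one_le_exp ‖θ - x‖]
      _ = exp (‖θ - x‖ ^ 2 / 2 + ‖θ - x‖) := (exp_add _ _).symm
      _ ≤ exp (3 / 2 + (‖θ₀ - x‖ ^ 2 / 2 + 2 * ‖θ₀ - x‖)) := by
          rw [exp_le_exp]
          nlinarith [norm_nonneg (θ - x)]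
  exact hasFDerivAt_integral_of_dominated_of_fderiv_le (Metric.ball_mem_nhds θ₀ one_pos)
    (Eventually.of_forall fun θ => (hμ θ).aestronglyMeasurable) (hμ θ₀)
    (by fun_prop) (Eventually.of_forall hbound)
    ((integrable_exp_half_sq_dist_add_mul_norm hμ θ₀ zero_le_two).const_mul _)
    (Eventually.of_forall fun x θ _ => hasFDerivAt_exp_half_sq_dist x θ)

theorem tendsto_expHalfSqDistIntegral_cocompact
    (hμ : ∀ θ, Integrable (fun x => exp (‖θ - x‖ ^ 2 / 2)) μ) (hμ0 : μ ≠ 0) :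
    Tendsto (expHalfSqDistIntegral μ) (cocompact E) atTop := by
  have hμ₀ : Integrable (fun x => exp (‖x‖ ^ 2 / 2)) μ := by simpa using hμ 0
  have : IsFiniteMeasure μ := by
    refine ((integrable_const_iff (c := (1 : ℝ))).1 (hμ₀.mono' aestronglyMeasurable_const
      (Eventually.of_forall fun x => ?_))).resolve_left one_ne_zero
    rw [norm_one]
    exact one_le_exp (by positivity)
  have hsq : Integrable (fun x => ‖x‖ ^ 2 / 2) μ :=
    hμ₀.mono' (by fun_prop) (Eventually.of_forall fun x => by
      rw [norm_of_nonneg (by positivity)]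
      linarith [add_one_le_exp (‖x‖ ^ 2 / 2)])
  set c := μ.real univ / 4
  set C := ∫ x, ‖x‖ ^ 2 / 2 ∂μ
  have hc : 0 < c := by
    have : 0 < μ.real univ := ENNReal.toReal_pos (Measure.measure_univ_ne_zero.2 hμ0)
      (measure_ne_top μ univ)
    positivity
  have hlower (θ : E) : c * ‖θ‖ ^ 2 - C ≤ expHalfSqDistIntegral μ θ := by
    have hpt (x : E) : ‖θ‖ ^ 2 / 4 - ‖x‖ ^ 2 / 2 ≤ exp (‖θ - x‖ ^ 2 / 2) := by
      have := pow_le_pow_left₀ (norm_nonneg θ) (norm_le_norm_sub_add θ x) 2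
      nlinarith [add_one_le_exp (‖θ - x‖ ^ 2 / 2), sq_nonneg (‖θ - x‖ - ‖x‖)]
    calc c * ‖θ‖ ^ 2 - C = ∫ x, (‖θ‖ ^ 2 / 4 - ‖x‖ ^ 2 / 2) ∂μ := by
          rw [integral_sub (integrable_const _) hsq, integral_const, smul_eq_mul]
          ring
      _ ≤ expHalfSqDistIntegral μ θ := integral_mono ((integrable_const _).sub hsq) (hμ θ) hpt
  refine tendsto_atTop_mono hlower ?_
  exact (tendsto_atTop_add_const_right _ (-C)
    ((tendsto_pow_atTop two_ne_zero).const_mul_atTop hc)).comp tendsto_norm_cocompact_atTop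

end ExpHalfSqDistIntegral

section SecondMoment

variable {d : ℕ} {φ : EuclideanSpace ℝ (Fin d) → ℝ}

noncomputable def secondMomentWeight (d : ℕ) (φ : EuclideanSpace ℝ (Fin d) → ℝ)
    (x : EuclideanSpace ℝ (Fin d)) : ℝ :=
  φ x ^ 2 * stdGaussDensity d x * exp (-‖x‖ ^ 2 / 2)

noncomputable def secondMomentMeasure (d : ℕ) (φ : EuclideanSpace ℝ (Fin d) → ℝ) :
    Measure (EuclideanSpace ℝ (Fin d)) :=
  volume.withDensity fun x => ENNReal.ofReal (secondMomentWeight d φ x)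

theorem stdGaussDensity_pos (x : EuclideanSpace ℝ (Fin d)) : 0 < stdGaussDensity d x := by
  unfold stdGaussDensity
  positivity

theorem secondMomentWeight_nonneg (x : EuclideanSpace ℝ (Fin d)) :
    0 ≤ secondMomentWeight d φ x := by
  have := stdGaussDensity_pos x
  unfold secondMomentWeight
  positivity

theorem secondMomentWeight_pos {x : EuclideanSpace ℝ (Fin d)} (hx : φ x ≠ 0) :
    0 < secondMomentWeight d φ x := by
  have := stdGaussDensity_pos x
  unfold secondMomentWeight
  positivity

theorem secondMomentWeight_mul_exp (θ x : EuclideanSpace ℝ (Fin d)) :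
    secondMomentWeight d φ x * exp (‖θ - x‖ ^ 2 / 2)
      = exp (‖θ‖ ^ 2 / 2) * (φ x ^ 2 * exp (-⟪θ, x⟫) * stdGaussDensity d x) := by
  have hexp : exp (-‖x‖ ^ 2 / 2) * exp (‖θ - x‖ ^ 2 / 2)
      = exp (‖θ‖ ^ 2 / 2) * exp (-⟪θ, x⟫) := by
    rw [← exp_add, ← exp_add, norm_sub_sq_real]
    ring_nf
  unfold secondMomentWeight
  linear_combination φ x ^ 2 * stdGaussDensity d x * hexp

theorem aemeasurable_secondMomentWeight
    (hint : Integrable (fun x => φ x ^ 2 * exp (-⟪0, x⟫) * stdGaussDensity d x)) :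
    AEMeasurable (secondMomentWeight d φ) := by
  have := hint.aemeasurable.mul (by fun_prop : Measurable fun x : EuclideanSpace ℝ (Fin d) =>
    exp (-‖x‖ ^ 2 / 2)).aemeasurable
  refine this.congr (Eventually.of_forall fun x => ?_)
  simp [secondMomentWeight]

theorem secondMoment_eq_expHalfSqDistIntegral (hw : AEMeasurable (secondMomentWeight d φ)) :
    secondMoment d φ = expHalfSqDistIntegral (secondMomentMeasure d φ) := by
  ext θ
  rw [expHalfSqDistIntegral, secondMomentMeasure, secondMoment,
    integral_withDensity_eq_integral_toReal_smul₀ hw.ennreal_ofReal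
      (Eventually.of_forall fun _ => ENNReal.ofReal_lt_top)]
  refine integral_congr_ae (Eventually.of_forall fun x => ?_)
  simp only [ENNReal.toReal_ofReal (secondMomentWeight_nonneg x), smul_eq_mul,
    secondMomentWeight_mul_exp, exp_add, real_inner_comm x θ]
  ring

theorem integrable_exp_half_sq_dist_secondMomentMeasure
    (hw : AEMeasurable (secondMomentWeight d φ)) {θ : EuclideanSpace ℝ (Fin d)}
    (hθ : Integrable (fun x => φ x ^ 2 * exp (-⟪θ, x⟫) * stdGaussDensity d x)) :
    Integrable (fun x => exp (‖θ - x‖ ^ 2 / 2)) (secondMomentMeasure d φ) := by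
  rw [secondMomentMeasure, integrable_withDensity_iff_integrable_smul₀' hw.ennreal_ofReal
    (Eventually.of_forall fun _ => ENNReal.ofReal_lt_top)]
  refine (hθ.const_mul (exp (‖θ‖ ^ 2 / 2))).congr (Eventually.of_forall fun x => ?_)
  simp only [ENNReal.toReal_ofReal (secondMomentWeight_nonneg x), smul_eq_mul,
    secondMomentWeight_mul_exp]

theorem secondMomentMeasure_ne_zero (hw : AEMeasurable (secondMomentWeight d φ))
    (hpos : 0 < ∫ x in {x | φ x ≠ 0}, stdGaussDensity d x) :
    secondMomentMeasure d φ ≠ 0 := by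
  rw [secondMomentMeasure, Ne, withDensity_eq_zero_iff hw.ennreal_ofReal]
  intro hzero
  have hnull : volume {x | φ x ≠ 0} = 0 := by
    refine measure_mono_null (fun x hx => ?_) (ae_iff.1 hzero)
    simpa using secondMomentWeight_pos (d := d) hx
  rw [Measure.restrict_eq_zero.2 hnull, integral_zero_measure] at hpos
  exact hpos.false

end SecondMoment

theorem stmt_5_general {d : ℕ} (φ : EuclideanSpace ℝ (Fin d) → ℝ)
    (hint : ∀ θ : EuclideanSpace ℝ (Fin d),
      Integrable (fun x => (φ x) ^ 2 * Real.exp (-⟪θ, x⟫) * stdGaussDensity d x))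
    (hpos : 0 < ∫ x in {x | φ x ≠ 0}, stdGaussDensity d x) :
    (∃! θstar : EuclideanSpace ℝ (Fin d), ∀ θ, secondMoment d φ θstar ≤ secondMoment d φ θ) ∧
      ∀ θstar : EuclideanSpace ℝ (Fin d),
        ((∀ θ, secondMoment d φ θstar ≤ secondMoment d φ θ) ↔
          gradient (secondMoment d φ) θstar = 0) := by
  have hw := aemeasurable_secondMomentWeight (hint 0)
  have hμ (θ : EuclideanSpace ℝ (Fin d)) :=
    integrable_exp_half_sq_dist_secondMomentMeasure hw (hint θ)
  have hμ0 := secondMomentMeasure_ne_zero hw hpos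
  have hconvex := strictConvexOn_expHalfSqDistIntegral hμ hμ0
  have hdiff : Differentiable ℝ (expHalfSqDistIntegral (secondMomentMeasure d φ)) :=
    fun θ => (hasFDerivAt_expHalfSqDistIntegral hμ θ).differentiableAt
  rw [secondMoment_eq_expHalfSqDistIntegral hw]
  exact ⟨hconvex.existsUnique_forall_le hdiff.continuous
      (tendsto_expHalfSqDistIntegral_cocompact hμ hμ0),
    fun θ => hconvex.convexOn.forall_le_iff_gradient_eq_zero (hdiff θ)⟩

/-- There exists a unique minimizer `θ*` of `v`, and minimizers are exactly the
critical points `∇v(θ) = 0`. -/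
theorem stmt_5 {d : ℕ} (φ : EuclideanSpace ℝ (Fin d) → ℝ) (hφ : Measurable φ)
    (hint : ∀ θ : EuclideanSpace ℝ (Fin d),
      Integrable (fun x => (φ x) ^ 2 * Real.exp (-⟪θ, x⟫) * stdGaussDensity d x))
    (hpos : 0 < ∫ x in {x | φ x ≠ 0}, stdGaussDensity d x) :
    (∃! θstar : EuclideanSpace ℝ (Fin d), ∀ θ, secondMoment d φ θstar ≤ secondMoment d φ θ) ∧
      ∀ θstar : EuclideanSpace ℝ (Fin d),
        ((∀ θ, secondMoment d φ θstar ≤ secondMoment d φ θ) ↔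
          gradient (secondMoment d φ) θstar = 0) :=
  stmt_5_general φ hint hpos
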